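/- arXiv:0706.0972 — 2 statements merged into one kernel-verified Lean document; each statement's English description precedes it below -/
import Mathlib

section
/- Let E be an elliptic curve over F_q with Frobenius eigenvalues α, β (so αβ = q and α + β = a with |a| ≤ 2√q). If |E(F_{q^n})| ≡ 1 (mod q^n) for all n ≥ 1, then α^n + β^n is divisible by q^n in the algebraic integers for all n ≥ 1, which is impossible. -/
/-!
Writing `α ^ n + β ^ n = q ^ n * t (n - 1)` with integers `t`, Newton's recurrence
`s (n + 2) = (α + β) s (n + 1) - q s n` for the power sums becomes
`t n = q * (t 0 * t (n + 1) - t (n + 2))`. Hence every `t n` is divisible by every power of `q`,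
so all `t n` vanish; but then the recurrence at `n = 0` reads `0 = -2q`.
-/

theorem Int.eq_zero_of_forall_eq_mul_sub {q c : ℤ} (hq : q.natAbs ≠ 1) {t : ℕ → ℤ}
    (ht : ∀ n, t n = q * (c * t (n + 1) - t (n + 2))) (n : ℕ) : t n = 0 := by
  have hdvd : ∀ k n, q ^ k ∣ t n := by
    intro k
    induction k with
    | zero => simp
    | succ k ih =>
      intro n
      rw [ht n, pow_succ']
      exact mul_dvd_mul_left q (dvd_sub ((ih _).mul_left c) (ih _))
  by_contra hn
  exact FiniteMultiplicity.not_iff_forall.mpr (fun k => hdvd k n)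
    (Int.finiteMultiplicity_iff.mpr ⟨hq, hn⟩)

theorem not_forall_sum_pow_eq_pow_mul_int {K : Type*} [Field K] [CharZero K] {q : ℕ}
    (hq : 1 < q) {α β : K} (hprod : α * β = q)
    (hdvd : ∀ n, 1 ≤ n → ∃ m : ℤ, α ^ n + β ^ n = q ^ n * m) : False := by
  have hq0 : (q : K) ≠ 0 := by norm_cast; omega
  choose t ht using fun n : ℕ => hdvd (n + 1) (by omega)
  have newton (n : ℕ) : α ^ (n + 2) + β ^ (n + 2) =
      (α + β) * (α ^ (n + 1) + β ^ (n + 1)) - α * β * (α ^ n + β ^ n) := by ring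
  have hsum : α + β = q * t 0 := by simpa using ht 0
  have hrec (n : ℕ) : t n = q * (t 0 * t (n + 1) - t (n + 2)) := by
    have h := newton (n + 1)
    rw [ht, ht, ht, hsum, hprod] at h
    have : (q : K) ^ (n + 2) * t n = q ^ (n + 2) * (q * (t 0 * t (n + 1) - t (n + 2))) := by
      linear_combination h
    exact_mod_cast mul_left_cancel₀ (pow_ne_zero _ hq0) this
  have ht0 := Int.eq_zero_of_forall_eq_mul_sub (by omega) hrec
  have h := newton 0
  rw [ht, ht, ht0, ht0, hprod] at h
  have h2q : (2 * q : K) = 0 := by linear_combination h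
  exact hq0 (by simpa using h2q)

theorem stmt_2_general (q : ℕ) (hq : IsPrimePow q) (α β : ℂ)
    (hprod : α * β = (q : ℂ))
    (count : ℕ → ℕ)
    (hcount : ∀ n : ℕ, 1 ≤ n → (count n : ℂ) = (q : ℂ) ^ n + 1 - (α ^ n + β ^ n))
    (hcong : ∀ n : ℕ, 1 ≤ n → count n ≡ 1 [MOD q ^ n]) :
    (∀ n : ℕ, 1 ≤ n → IsIntegral ℤ ((α ^ n + β ^ n) / (q : ℂ) ^ n)) ∧ False := by
  have hdvd (n : ℕ) (hn : 1 ≤ n) : ∃ m : ℤ, α ^ n + β ^ n = q ^ n * m := by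
    obtain ⟨k, hk⟩ := Nat.modEq_iff_dvd.mp (hcong n hn)
    refine ⟨1 + k, ?_⟩
    have hkC : (1 - count n : ℂ) = q ^ n * k := by exact_mod_cast congrArg (Int.cast : ℤ → ℂ) hk
    push_cast
    linear_combination hcount n hn + hkC
  have hq0 : (q : ℂ) ≠ 0 := by exact_mod_cast hq.ne_zero
  refine ⟨fun n hn => ?_, not_forall_sum_pow_eq_pow_mul_int hq.one_lt hprod hdvd⟩
  obtain ⟨m, hm⟩ := hdvd n hn
  rw [hm, mul_div_cancel_left₀ _ (pow_ne_zero _ hq0)]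
  exact isIntegral_algebraMap (x := m)

/-- Let `E` be an elliptic curve over `F_q` with Frobenius eigenvalues `α, β`
(so `αβ = q` and `α + β = a` with `|a| ≤ 2√q`).  If `|E(F_{q^n})| ≡ 1 (mod q^n)` for all
`n ≥ 1` (where `|E(F_{q^n})| = q^n + 1 - (α^n + β^n)`), then `α^n + β^n` is divisible by
`q^n` in the ring of algebraic integers for all `n ≥ 1`, which is impossible. -/
theorem stmt_2 (q : ℕ) (hq : IsPrimePow q) (α β : ℂ)
    (hα : IsIntegral ℤ α) (hβ : IsIntegral ℤ β)
    (hprod : α * β = (q : ℂ)) (a : ℤ) (hsum : α + β = (a : ℂ))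
    (ha : (|a| : ℝ) ≤ 2 * Real.sqrt q)
    (count : ℕ → ℕ)
    (hcount : ∀ n : ℕ, 1 ≤ n → (count n : ℂ) = (q : ℂ) ^ n + 1 - (α ^ n + β ^ n))
    (hcong : ∀ n : ℕ, 1 ≤ n → count n ≡ 1 [MOD q ^ n]) :
    (∀ n : ℕ, 1 ≤ n → IsIntegral ℤ ((α ^ n + β ^ n) / (q : ℂ) ^ n)) ∧ False :=
  stmt_2_general q hq α β hprod count hcount hcong
end

section
/- Let α and β be algebraic integers with αβ = q for a prime power q, and suppose α + β ∈ q·\bar{ℤ}. Then it is impossible that α^n + β^n ∈ q^n·\bar{ℤ} holds for all n ≥ 1. -/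
open Polynomial

/-- Evaluating an integer polynomial at an algebraic integer gives an algebraic integer. -/
lemma aux_aeval_integral {y : ℂ} (hy : IsIntegral ℤ y) (P : ℤ[X]) :
    IsIntegral ℤ (aeval y P) := by
  induction P using Polynomial.induction_on' with
  | add p q hp hq => simpa [map_add] using hp.add hq
  | monomial n a =>
      simp only [aeval_monomial]
      exact isIntegral_algebraMap.mul (hy.pow n)

/-- A rational number (given as a ratio of integers in `ℂ`) that is integral over `ℤ`
gives a divisibility in `ℤ`. -/
lemma aux_rat_integral (c : ℤ) (d : ℕ) (hd : 0 < d)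
    (h : IsIntegral ℤ ((c : ℂ) / (d : ℂ))) : (d : ℤ) ∣ c := by
  have hdq : (d : ℚ) ≠ 0 := Nat.cast_ne_zero.mpr hd.ne'
  have hmap : (algebraMap ℚ ℂ) ((c : ℚ) / (d : ℚ)) = (c : ℂ) / (d : ℂ) := by
    push_cast
    simp
  have h2 : IsIntegral ℤ ((c : ℚ) / (d : ℚ)) := by
    rw [← isIntegral_algebraMap_iff (algebraMap ℚ ℂ).injective, hmap]
    exact h
  obtain ⟨k, hk⟩ := IsIntegrallyClosed.isIntegral_iff.mp h2
  refine ⟨k, ?_⟩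
  have : (c : ℚ) = (d : ℚ) * (k : ℚ) := by
    rw [show ((k : ℤ) : ℚ) = algebraMap ℤ ℚ k from rfl, hk]
    field_simp
  exact_mod_cast this

lemma aux_no_inf_div (q : ℕ) (hq2 : 2 ≤ q) (c : ℤ) (hc : c ≠ 0)
    (h : ∀ m : ℕ, IsIntegral ℤ ((c : ℂ) / (q : ℂ) ^ m)) : False := by
  set m := c.natAbs with hm
  have hdvd : ((q ^ m : ℕ) : ℤ) ∣ c := by
    have := aux_rat_integral c (q ^ m) (pow_pos (by omega) m) ?_
    · exact this
    · have := h m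
      push_cast
      push_cast at this
      exact this
  have h1 : (q : ℤ) ^ m ≤ |c| := by
    have := Int.le_of_dvd (abs_pos.mpr hc) ((dvd_abs _ _).mpr (by exact_mod_cast hdvd))
    exact_mod_cast this
  have h2 : (m : ℤ) < (q : ℤ) ^ m := by
    have hn : m < 2 ^ m := Nat.lt_two_pow_self
    have : (2 : ℕ) ^ m ≤ q ^ m := Nat.pow_le_pow_left hq2 m
    exact_mod_cast lt_of_lt_of_le hn this
  have : |c| = (m : ℤ) := by
    rw [hm]; exact (Int.abs_eq_natAbs c)
  omega

/-- Let `α`, `β` be algebraic integers (in `ℂ`) with `αβ = q` for a prime power `q`, and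
suppose `α + β ∈ q·ℤ̄`.  Then it is impossible that `α^n + β^n ∈ q^n·ℤ̄` for all `n ≥ 1`. -/
theorem stmt_16 (q : ℕ) (hq : IsPrimePow q) (α β : ℂ)
    (hα : IsIntegral ℤ α) (hβ : IsIntegral ℤ β) (hprod : α * β = (q : ℂ))
    (hsum : IsIntegral ℤ ((α + β) / (q : ℂ))) :
    ¬ (∀ n : ℕ, 1 ≤ n → IsIntegral ℤ ((α ^ n + β ^ n) / (q : ℂ) ^ n)) := by
  intro h
  have hq2 : 2 ≤ q := hq.two_le
  have hq0 : (q : ℂ) ≠ 0 := Nat.cast_ne_zero.mpr (by omega)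
  have hβ0 : β ≠ 0 := by
    intro h0; apply hq0; rw [← hprod, h0, mul_zero]
  -- v = β²/q is an algebraic integer
  have hv : IsIntegral ℤ (β ^ 2 / (q : ℂ)) := by
    have hid : β ^ 2 / (q : ℂ) = ((α + β) / (q : ℂ)) * β - 1 := by
      field_simp
      linear_combination -hprod
    rw [hid]
    exact (hsum.mul hβ).sub isIntegral_one
  set z : ℂ := (β ^ 2 / (q : ℂ)) ^ 2 with hzdef
  have hz : IsIntegral ℤ z := hv.pow 2
  -- the key sequence: (1 + z^m)/q^m is integral for all m
  have hT : ∀ m : ℕ, IsIntegral ℤ ((1 + z ^ m) / (q : ℂ) ^ m) := by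
    intro m
    rcases Nat.eq_zero_or_pos m with hm | hm
    · subst hm
      simpa using (isIntegral_one.add isIntegral_one : IsIntegral ℤ ((1 : ℂ) + 1))
    · have hδ := h (2 * m) (by omega)
      have hAB : α ^ m * β ^ m = (q : ℂ) ^ m := by rw [← mul_pow, hprod]
      have hQm : (q : ℂ) ^ m ≠ 0 := pow_ne_zero m hq0
      have e1 : ∀ x : ℂ, x ^ (2 * m) = (x ^ m) ^ 2 := fun x => by rw [pow_mul']
      have e2 : (β ^ 2 / (q : ℂ)) ^ m = (β ^ m) ^ 2 / (q : ℂ) ^ m := by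
        rw [div_pow, ← pow_mul, mul_comm 2 m, pow_mul]
      have e3 : z ^ m = ((β ^ m) ^ 2 / (q : ℂ) ^ m) ^ 2 := by
        rw [hzdef, ← pow_mul, mul_comm 2 m, pow_mul, e2]
      have key : ((α ^ m) ^ 2 + (β ^ m) ^ 2) / ((q : ℂ) ^ m) ^ 2 *
          ((β ^ m) ^ 2 / (q : ℂ) ^ m) =
          (1 + ((β ^ m) ^ 2 / (q : ℂ) ^ m) ^ 2) / (q : ℂ) ^ m := by
        field_simp
        linear_combination (α ^ m * β ^ m + (q : ℂ) ^ m) * hAB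
      have hE : IsIntegral ℤ (((α ^ (2 * m) + β ^ (2 * m)) / (q : ℂ) ^ (2 * m)) *
          ((β ^ 2 / (q : ℂ)) ^ m)) := hδ.mul (hv.pow m)
      rw [e1 α, e1 β, e1 ((q : ℂ)), e2, key] at hE
      rw [e3]
      exact hE
  -- hence (1 - z)/q^m is integral for all m
  have hY : ∀ m : ℕ, IsIntegral ℤ ((1 - z) / (q : ℂ) ^ m) := by
    intro m
    have hid : (1 - z) / (q : ℂ) ^ m =
        (q : ℂ) * ((1 + z ^ (m + 1)) / (q : ℂ) ^ (m + 1)) - z * ((1 + z ^ m) / (q : ℂ) ^ m) := by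
      field_simp
      ring
    rw [hid]
    exact ((isIntegral_algebraMap (x := (q : ℤ))).mul (hT (m + 1))).sub (hz.mul (hT m))
  -- z must equal 1
  have hz1 : z = 1 := by
    by_contra hne
    have hy0 : (1 : ℂ) - z ≠ 0 := sub_ne_zero.mpr (Ne.symm hne)
    have hyint : IsIntegral ℤ ((1 : ℂ) - z) := isIntegral_one.sub hz
    set P : ℤ[X] := minpoly ℤ ((1 : ℂ) - z) with hP
    set c : ℤ := P.coeff 0 with hcdef
    have hc0 : c ≠ 0 := by
      have hQint : IsIntegral ℚ ((1 : ℂ) - z) := hyint.tower_top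
      have hfield := minpoly.coeff_zero_ne_zero hQint hy0
      have heq : minpoly ℚ ((1 : ℂ) - z) = P.map (algebraMap ℤ ℚ) :=
        minpoly.isIntegrallyClosed_eq_field_fractions' ℚ hyint
      intro hc
      apply hfield
      rw [heq, Polynomial.coeff_map, ← hcdef, hc, map_zero]
    have haeval : aeval ((1 : ℂ) - z) P = 0 := minpoly.aeval ℤ _
    have hcid : (c : ℂ) = -(((1 : ℂ) - z) * aeval ((1 : ℂ) - z) (divX P)) := by
      have := Polynomial.divX_mul_X_add P
      have h2 : aeval ((1 : ℂ) - z) (divX P * X + C (P.coeff 0)) = 0 := by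
        rw [this]; exact haeval
      simp only [map_add, map_mul, aeval_X, aeval_C] at h2
      have : algebraMap ℤ ℂ (P.coeff 0) = (c : ℂ) := by rw [← hcdef]; simp
      rw [this] at h2
      linear_combination h2
    apply aux_no_inf_div q hq2 c hc0
    intro m
    have hid : (c : ℂ) / (q : ℂ) ^ m =
        ((1 - z) / (q : ℂ) ^ m) * (-(aeval ((1 : ℂ) - z) (divX P))) := by
      rw [hcid]; ring
    rw [hid]
    exact (hY m).mul (aux_aeval_integral hyint (divX P)).neg
  -- from z = 1 derive β⁴ = q², α⁴ = q²
  have hβ4 : β ^ 4 = (q : ℂ) ^ 2 := by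
    have h1 : (β ^ 2 / (q : ℂ)) ^ 2 = 1 := hz1
    field_simp at h1
    linear_combination h1
  have hα4 : α ^ 4 = (q : ℂ) ^ 2 := by
    have hpow : α ^ 4 * β ^ 4 = (q : ℂ) ^ 4 := by
      rw [← mul_pow, hprod]
    have hq2ne : (q : ℂ) ^ 2 ≠ 0 := pow_ne_zero 2 hq0
    have h5 : α ^ 4 * (q : ℂ) ^ 2 = (q : ℂ) ^ 2 * (q : ℂ) ^ 2 := by
      linear_combination hpow - α ^ 4 * hβ4
    exact mul_right_cancel₀ hq2ne h5
  -- now (α⁴+β⁴)/q⁴ = 2/q² must be integral, contradiction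
  have h4 := h 4 (by omega)
  have hid : (α ^ 4 + β ^ 4) / (q : ℂ) ^ 4 = ((2 : ℤ) : ℂ) / ((q ^ 2 : ℕ) : ℂ) := by
    rw [hα4, hβ4]
    push_cast
    field_simp
    ring
  rw [hid] at h4
  have hdvd : ((q ^ 2 : ℕ) : ℤ) ∣ 2 := aux_rat_integral 2 (q ^ 2) (by positivity) h4
  have : (q : ℤ) ^ 2 ∣ 2 := by exact_mod_cast hdvd
  have hle : (q : ℤ) ^ 2 ≤ 2 := Int.le_of_dvd (by norm_num) this
  have : (2 : ℤ) ≤ (q : ℤ) := by exact_mod_cast hq2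
  nlinarith
end
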